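/- Let 0 < α < 1, h > 0, t ∈ ℝ, and let f : ℝ → ℝ be a bounded measurable function. Let Y₁, Y₂, … be independent, identically distributed random variables taking values in {1,2,3,…}, each with the Sibuya distribution with parameter α, i.e. P(Y_n = k) = (-1)^{k+1} binom(α,k). Then, with probability one, (1/h^α)·[f(t) - (1/N) Σ_{n=1}^{N} f(t - Y_n h)] converges, as N → ∞, to A_h^α f(t) := (1/h^α) Σ_{k=0}^∞ (-1)^k binom(α,k) f(t-kh). -/

import Mathlib

open Real Filter MeasureTheory ProbabilityTheory

/-- Generalized binomial coefficient `binom(a, k) = a(a-1)⋯(a-k+1)/k!`. -/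
noncomputable def genBinom (a : ℝ) (k : ℕ) : ℝ :=
  (∏ j ∈ Finset.range k, (a - (j : ℝ))) / (Nat.factorial k : ℝ)

/-!
The Sibuya law is the Grünwald–Letnikov weight sequence with its first term removed and its
sign flipped: `P(Y = k) = δ_{k,0} - (-1)^k binom(α,k)`. Hence
`A_h^α f(t) = h^{-α} (f(t) - E f(t - Y h))`, and the strong law of large numbers for the bounded
i.i.d. variables `f(t - Yₙ h)` gives the almost sure convergence.
-/

open Finset Topology

lemma genBinom_zero (a : ℝ) : genBinom a 0 = 1 := by
  simp [genBinom]

lemma genBinom_succ (a : ℝ) (k : ℕ) :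
    genBinom a (k + 1) = genBinom a k * (a - k) / (k + 1) := by
  simp only [genBinom, prod_range_succ, Nat.factorial_succ]
  push_cast
  rw [div_mul_eq_mul_div, div_div, mul_comm ((k : ℝ) + 1)]

lemma neg_one_pow_succ_mul_genBinom_nonneg {α : ℝ} (hα0 : 0 ≤ α) (hα1 : α ≤ 1) {k : ℕ}
    (hk : 1 ≤ k) : 0 ≤ (-1 : ℝ) ^ (k + 1) * genBinom α k := by
  induction k, hk using Nat.le_induction with
  | base => simpa [genBinom] using hα0
  | succ n hn ih =>
    have hαn : α ≤ n := hα1.trans (by exact_mod_cast hn)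
    calc (0 : ℝ) ≤ (-1) ^ (n + 1) * genBinom α n * ((n - α) / (n + 1)) :=
          mul_nonneg ih (div_nonneg (by linarith) (by positivity))
      _ = (-1) ^ (n + 1 + 1) * genBinom α (n + 1) := by rw [genBinom_succ]; ring

section Discrete

variable {Ω β : Type*} [MeasurableSpace Ω] [MeasurableSpace β] [Countable β]
  [MeasurableSingletonClass β]

theorem identDistrib_of_measure_preimage_singleton_eq {Ω' : Type*} [MeasurableSpace Ω']
    {μ : Measure Ω} {ν : Measure Ω'} {X : Ω → β} {Y : Ω' → β} (hX : Measurable X)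
    (hY : Measurable Y) (h : ∀ b, μ (X ⁻¹' {b}) = ν (Y ⁻¹' {b})) : IdentDistrib X Y μ ν :=
  ⟨hX.aemeasurable, hY.aemeasurable, Measure.ext_of_singleton fun b => by
    rw [Measure.map_apply hX (measurableSet_singleton b),
      Measure.map_apply hY (measurableSet_singleton b), h]⟩

theorem hasSum_measureReal_singleton_smul_integral {E : Type*} [NormedAddCommGroup E]
    [NormedSpace ℝ E] [CompleteSpace E] {μ : Measure β} {g : β → E} (hg : Integrable g μ) :
    HasSum (fun b => μ.real {b} • g b) (∫ b, g b ∂μ) := by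
  rw [← Measure.sum_smul_dirac μ] at hg
  have := hasSum_integral_measure hg
  simpa [integral_smul_measure, Measure.sum_smul_dirac, measureReal_def] using this

theorem hasSum_measureReal_preimage_mul_integral {P : Measure Ω} {Y : Ω → β}
    (hY : Measurable Y) {g : β → ℝ} (hg : Integrable (fun ω => g (Y ω)) P) :
    HasSum (fun b => P.real (Y ⁻¹' {b}) * g b) (∫ ω, g (Y ω) ∂P) := by
  have hg' : Integrable g (P.map Y) :=
    (integrable_map_measure (measurable_of_countable g).aestronglyMeasurable
      hY.aemeasurable).2 hg
  have := hasSum_measureReal_singleton_smul_integral hg'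
  rw [integral_map hY.aemeasurable (measurable_of_countable g).aestronglyMeasurable] at this
  simpa [map_measureReal_apply hY (measurableSet_singleton _)] using this

end Discrete

theorem ae_tendsto_average_comp_of_iIndepFun {Ω β : Type*} [MeasurableSpace Ω]
    [MeasurableSpace β] {P : Measure Ω} {Y : ℕ → Ω → β} (hindep : iIndepFun Y P)
    (hident : ∀ n, IdentDistrib (Y n) (Y 0) P P) {g : β → ℝ} (hg : Measurable g)
    (hint : Integrable (fun ω => g (Y 0 ω)) P) :
    ∀ᵐ ω ∂P, Tendsto (fun N : ℕ => (∑ n ∈ range N, g (Y n ω)) / N) atTop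
      (𝓝 (∫ ω, g (Y 0 ω) ∂P)) :=
  strong_law_ae_real (fun n ω => g (Y n ω)) hint
    (fun _ _ hij => (hindep.indepFun hij).comp hg hg) fun n => (hident n).comp hg

theorem measureReal_preimage_singleton_eq_of_sibuya {Ω : Type*} [MeasurableSpace Ω]
    {P : Measure Ω} {α : ℝ} (hα0 : 0 ≤ α) (hα1 : α ≤ 1) {Y : Ω → ℕ} (hY_pos : ∀ ω, 1 ≤ Y ω)
    (hY_distrib : ∀ k, 1 ≤ k →
      P {ω | Y ω = k} = ENNReal.ofReal ((-1 : ℝ) ^ (k + 1) * genBinom α k)) (k : ℕ) :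
    P.real (Y ⁻¹' {k}) = (if k = 0 then 1 else 0) - (-1 : ℝ) ^ k * genBinom α k := by
  rcases Nat.eq_zero_or_pos k with rfl | hk
  · have : Y ⁻¹' {0} = ∅ := Set.eq_empty_of_forall_notMem fun ω h0 => by
      have := hY_pos ω; simp_all
    simp [this, genBinom_zero]
  · have hPk : P (Y ⁻¹' {k}) = _ := hY_distrib k hk
    rw [measureReal_def, hPk,
      ENNReal.toReal_ofReal (neg_one_pow_succ_mul_genBinom_nonneg hα0 hα1 hk), if_neg hk.ne']
    ring

theorem monte_carlo_gl_derivative_alpha_lt_one_general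
    (α : ℝ) (hα0 : 0 < α) (hα1 : α < 1) (h : ℝ) (t : ℝ)
    (f : ℝ → ℝ) (hf_bdd : ∃ M : ℝ, ∀ x, |f x| ≤ M)
    {Ω : Type*} [MeasurableSpace Ω] (P : Measure Ω) [IsProbabilityMeasure P]
    (Y : ℕ → Ω → ℕ) (hY_meas : ∀ n, Measurable (Y n))
    (hY_indep : iIndepFun Y P)
    (hY_pos : ∀ n ω, 1 ≤ Y n ω)
    (hY_distrib : ∀ n k, 1 ≤ k →
      P {ω | Y n ω = k} = ENNReal.ofReal ((-1 : ℝ) ^ (k + 1) * genBinom α k)) :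
    ∀ᵐ ω ∂P, Tendsto
      (fun N : ℕ => (1 / h ^ α) *
        (f t - (1 / (N : ℝ)) * ∑ n ∈ Finset.range N, f (t - (Y n ω : ℝ) * h)))
      atTop
      (nhds ((1 / h ^ α) *
        ∑' k : ℕ, (-1 : ℝ) ^ k * genBinom α k * f (t - (k : ℝ) * h))) := by
  obtain ⟨M, hM⟩ := hf_bdd
  set g : ℕ → ℝ := fun k => f (t - k * h)
  have hlaw n := measureReal_preimage_singleton_eq_of_sibuya hα0.le hα1.le (hY_pos n)
    (hY_distrib n)
  have hident n : IdentDistrib (Y n) (Y 0) P P :=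
    identDistrib_of_measure_preimage_singleton_eq (hY_meas n) (hY_meas 0) fun k =>
      (ENNReal.toReal_eq_toReal_iff' (measure_ne_top _ _) (measure_ne_top _ _)).1 <| by
        simpa only [measureReal_def] using (hlaw n k).trans (hlaw 0 k).symm
  have hint : Integrable (fun ω => g (Y 0 ω)) P :=
    .of_bound (measurable_of_countable g |>.comp (hY_meas 0)).aestronglyMeasurable M
      (ae_of_all _ fun _ => hM _)
  have hGL : HasSum (fun k => (-1 : ℝ) ^ k * genBinom α k * g k)
      (f t - ∫ ω, g (Y 0 ω) ∂P) := by
    have hterm k : (-1 : ℝ) ^ k * genBinom α k * g k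
        = (if k = 0 then g 0 else 0) - P.real (Y 0 ⁻¹' {k}) * g k := by
      rw [hlaw]
      split_ifs with hk
      · subst hk; ring
      · ring
    have hg0 : g 0 = f t := by simp [g]
    rw [funext hterm, ← hg0]
    exact (hasSum_ite_eq 0 (g 0)).sub (hasSum_measureReal_preimage_mul_integral (hY_meas 0) hint)
  filter_upwards [ae_tendsto_average_comp_of_iIndepFun hY_indep hident
    (measurable_of_countable g) hint] with ω hω
  rw [hGL.tsum_eq]
  simpa [g, div_eq_inv_mul] using (tendsto_const_nhds (x := f t)).sub hω |>.const_mul (1 / h ^ α)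

/-- Monte Carlo evaluation of the Grünwald–Letnikov fractional derivative of order
`0 < α < 1`: if `Y₁, Y₂, …` are i.i.d. Sibuya(α) random variables, then almost surely
`(1/h^α)[f(t) - (1/N) Σ_{n<N} f(t - Yₙ h)] → A_h^α f(t)` as `N → ∞`. -/
theorem monte_carlo_gl_derivative_alpha_lt_one
    (α : ℝ) (hα0 : 0 < α) (hα1 : α < 1) (h : ℝ) (hh : 0 < h) (t : ℝ)
    (f : ℝ → ℝ) (hf_meas : Measurable f) (hf_bdd : ∃ M : ℝ, ∀ x, |f x| ≤ M)
    {Ω : Type*} [MeasurableSpace Ω] (P : Measure Ω) [IsProbabilityMeasure P]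
    (Y : ℕ → Ω → ℕ) (hY_meas : ∀ n, Measurable (Y n))
    (hY_indep : iIndepFun Y P)
    (hY_pos : ∀ n ω, 1 ≤ Y n ω)
    (hY_distrib : ∀ n k, 1 ≤ k →
      P {ω | Y n ω = k} = ENNReal.ofReal ((-1 : ℝ) ^ (k + 1) * genBinom α k)) :
    ∀ᵐ ω ∂P, Tendsto
      (fun N : ℕ => (1 / h ^ α) *
        (f t - (1 / (N : ℝ)) * ∑ n ∈ Finset.range N, f (t - (Y n ω : ℝ) * h)))
      atTop
      (nhds ((1 / h ^ α) *
        ∑' k : ℕ, (-1 : ℝ) ^ k * genBinom α k * f (t - (k : ℝ) * h))) :=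
  monte_carlo_gl_derivative_alpha_lt_one_general α hα0 hα1 h t f hf_bdd P Y hY_meas hY_indep hY_pos
    hY_distrib
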